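/- arXiv:1905.08935 — 3 statements merged into one kernel-verified Lean document; each statement's English description precedes it below -/
import Mathlib

section
/- Let X be a compact Hausdorff space, μ₁ and μ₂ idempotent probability measures on X, and α, β ∈ ℝ with max(α, β) = 0. Then supp(α⊙μ₁ ⊕ β⊙μ₂) = supp μ₁ ∪ supp μ₂. -/
/-- `μ : C(X, ℝ) → ℝ` is an idempotent probability measure. -/
def IsIPM {X : Type*} [TopologicalSpace X] (μ : C(X, ℝ) → ℝ) : Prop :=
  (∀ c : ℝ, μ (ContinuousMap.const X c) = c) ∧
  (∀ (φ : C(X, ℝ)) (c : ℝ), μ (φ + ContinuousMap.const X c) = μ φ + c) ∧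
  (∀ φ ψ : C(X, ℝ), μ (φ ⊔ ψ) = max (μ φ) (μ ψ))

/-- `μ` is supported on the set `F`. -/
def IPMSupportedOn {X : Type*} [TopologicalSpace X] (μ : C(X, ℝ) → ℝ) (F : Set X) : Prop :=
  ∀ φ ψ : C(X, ℝ), (∀ x ∈ F, φ x = ψ x) → μ φ = μ ψ

/-- The support of `μ`. -/
def IPMsupport {X : Type*} [TopologicalSpace X] (μ : C(X, ℝ) → ℝ) : Set X :=
  ⋂₀ {F : Set X | IsClosed F ∧ IPMSupportedOn μ F}

/-- The pushforward `I(f)`. -/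
def IPMmap {X Y : Type*} [TopologicalSpace X] [TopologicalSpace Y]
    (f : C(X, Y)) (μ : C(X, ℝ) → ℝ) : C(Y, ℝ) → ℝ :=
  fun ψ => μ (ψ.comp f)

/-- The max-plus combination `α⊙μ₁ ⊕ β⊙μ₂`. -/
def mpComb {X : Type*} [TopologicalSpace X] (α β : ℝ) (μ₁ μ₂ : C(X, ℝ) → ℝ) :
    C(X, ℝ) → ℝ :=
  fun φ => max (α + μ₁ φ) (β + μ₂ φ)

/-- The Dirac measure `δ_x`. -/
def IPMdirac {X : Type*} [TopologicalSpace X] (x : X) : C(X, ℝ) → ℝ := fun φ => φ x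

/-- `μ` is a finitely supported idempotent probability measure of the form
`λ₁⊙δ_{x₁} ⊕ … ⊕ λ_s⊙δ_{x_s}` with all the points `xᵢ` in `Y`. -/
def IsFinSuppIPM {X : Type*} [TopologicalSpace X] (Y : Set X) (μ : C(X, ℝ) → ℝ) : Prop :=
  ∃ (n : ℕ) (x : Fin (n + 1) → X) (lam : Fin (n + 1) → ℝ),
    (∀ i, x i ∈ Y) ∧
    Finset.univ.sup' Finset.univ_nonempty lam = 0 ∧
    μ = fun φ => Finset.univ.sup' Finset.univ_nonempty fun i => lam i + φ (x i)

/-- `I_β(X)`: idempotent probability measures on `βX` with support in (the image of) `X`. -/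
def IBeta (X : Type*) [TopologicalSpace X] : Set (C(StoneCech X, ℝ) → ℝ) :=
  {μ | IsIPM μ ∧ IPMsupport μ ⊆ Set.range (stoneCechUnit : X → StoneCech X)}

/-!
A closed set `F` carries `μ` iff `φ ≤ ψ` on `F` forces `μ φ ≤ μ ψ`, and it suffices to have this
up to every `ε > 0`. The combination `ν = α⊙μ₁ ⊕ β⊙μ₂` is carried by `supp μ₁ ∪ supp μ₂`, since each
`μᵢ` is carried by its support: by Urysohn's lemma two closed carriers can be intersected, and by
compactness the set `{φ ≥ ψ + ε}`, which misses `supp μ`, already misses a finite intersection of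
carriers. Conversely `μ₁ ≤ ν - α`, so if `ν` is carried by `F` and `φ ≤ ψ` on `F`, then `μ₁` stays
bounded along `ψ + t (φ - ψ)⁺`, which agrees with `ψ` on `F`; as `μ₁` is max-plus, this is only
possible if `μ₁ φ ≤ μ₁ ψ + δ` for every `δ > 0`.
-/

section

open ContinuousMap

variable {X : Type*} [TopologicalSpace X] {μ ν : C(X, ℝ) → ℝ} {F G : Set X}

namespace IsIPM

lemma map_add_const (h : IsIPM μ) (φ : C(X, ℝ)) (c : ℝ) : μ (φ + const X c) = μ φ + c :=
  h.2.1 φ c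

lemma map_sup (h : IsIPM μ) (φ ψ : C(X, ℝ)) : μ (φ ⊔ ψ) = max (μ φ) (μ ψ) :=
  h.2.2 φ ψ

lemma mono (h : IsIPM μ) {φ ψ : C(X, ℝ)} (hle : φ ≤ ψ) : μ φ ≤ μ ψ := by
  rw [← sup_eq_right.mpr hle, h.map_sup]
  exact le_max_left _ _

end IsIPM

namespace IPMSupportedOn

lemma univ (μ : C(X, ℝ) → ℝ) : IPMSupportedOn μ Set.univ :=
  fun _ _ h => congrArg μ (ContinuousMap.ext fun x => h x trivial)

lemma mono (hF : IPMSupportedOn μ F) (hFG : F ⊆ G) : IPMSupportedOn μ G :=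
  fun φ ψ h => hF φ ψ fun x hx => h x (hFG hx)

lemma le_add_of_le_add_on (h : IsIPM μ) (hF : IPMSupportedOn μ F) {φ ψ : C(X, ℝ)} {c : ℝ}
    (hle : ∀ x ∈ F, φ x ≤ ψ x + c) : μ φ ≤ μ ψ + c := by
  have hsup : μ (φ ⊔ (ψ + const X c)) = μ (ψ + const X c) :=
    hF _ _ fun x hx => by simpa using hle x hx
  rw [h.map_sup, h.map_add_const] at hsup
  exact hsup ▸ le_max_left _ _

lemma of_forall_le_add
    (hle : ∀ φ ψ : C(X, ℝ), (∀ x ∈ F, φ x ≤ ψ x) → ∀ ε > 0, μ φ ≤ μ ψ + ε) :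
    IPMSupportedOn μ F := fun φ ψ heq =>
  le_antisymm
    (le_of_forall_pos_le_add fun ε hε => hle φ ψ (fun x hx => (heq x hx).le) ε hε)
    (le_of_forall_pos_le_add fun ε hε => hle ψ φ (fun x hx => (heq x hx).ge) ε hε)

lemma inter [NormalSpace X] (h : IsIPM μ) (hFc : IsClosed F) (hGc : IsClosed G)
    (hF : IPMSupportedOn μ F) (hG : IPMSupportedOn μ G) : IPMSupportedOn μ (F ∩ G) := by
  refine of_forall_le_add fun φ ψ hle ε hε => ?_
  set K : Set X := {x | ψ x + ε / 2 ≤ φ x}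
  have hKc : IsClosed K := isClosed_le (by fun_prop) (by fun_prop)
  have hdisj : Disjoint (F ∩ K) (G ∩ K) := Set.disjoint_left.mpr
    fun x ⟨hxF, hxK⟩ ⟨hxG, _⟩ => by
      have := hle x ⟨hxF, hxG⟩
      simp only [K, Set.mem_ofPred_eq] at hxK
      linarith
  obtain ⟨u, hu0, hu1, hu01⟩ :=
    exists_continuous_zero_one_of_isClosed (hFc.inter hKc) (hGc.inter hKc) hdisj
  -- `χ` is `φ` on `F ∩ K` and `ψ` on `G ∩ K`; off `K`, `φ < ψ + ε / 2`, so any blend is close.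
  set χ : C(X, ℝ) := φ + u * (ψ - φ)
  have hχF : ∀ x ∈ F, φ x ≤ χ x + ε / 2 := fun x hxF => by
    have ⟨h0, h1⟩ := hu01 x
    simp only [χ, ContinuousMap.add_apply, mul_apply, ContinuousMap.sub_apply]
    by_cases hxK : x ∈ K
    · simp [hu0 ⟨hxF, hxK⟩, (half_pos hε).le]
    · simp only [K, Set.mem_ofPred_eq, not_le] at hxK
      nlinarith
  have hχG : ∀ x ∈ G, χ x ≤ ψ x + ε / 2 := fun x hxG => by
    have ⟨h0, h1⟩ := hu01 x
    simp only [χ, ContinuousMap.add_apply, mul_apply, ContinuousMap.sub_apply]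
    by_cases hxK : x ∈ K
    · have hx1 : u x = 1 := hu1 ⟨hxG, hxK⟩
      simp [hx1, (half_pos hε).le]
    · simp only [K, Set.mem_ofPred_eq, not_le] at hxK
      nlinarith
  linarith [hF.le_add_of_le_add_on h hχF, hG.le_add_of_le_add_on h hχG]

lemma biInter [NormalSpace X] {ι : Type*} (h : IsIPM μ) (s : Finset ι) {F : ι → Set X}
    (hFc : ∀ i, IsClosed (F i)) (hF : ∀ i, IPMSupportedOn μ (F i)) :
    IPMSupportedOn μ (⋂ i ∈ s, F i) := by
  classical
  induction s using Finset.induction_on with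
  | empty => simpa using univ μ
  | insert i s _ ih =>
    rw [Finset.set_biInter_insert]
    exact (hF i).inter h (hFc i) (isClosed_biInter fun j _ => hFc j) ih

end IPMSupportedOn

lemma isClosed_IPMsupport (μ : C(X, ℝ) → ℝ) : IsClosed (IPMsupport μ) :=
  isClosed_sInter fun _ hF => hF.1

lemma IPMsupport_subset (hFc : IsClosed F) (hF : IPMSupportedOn μ F) : IPMsupport μ ⊆ F :=
  Set.sInter_subset_of_mem ⟨hFc, hF⟩

lemma IsIPM.supportedOn_IPMsupport [CompactSpace X] [NormalSpace X] (h : IsIPM μ) :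
    IPMSupportedOn μ (IPMsupport μ) := by
  refine IPMSupportedOn.of_forall_le_add fun φ ψ hle ε hε => ?_
  set K : Set X := {x | ψ x + ε ≤ φ x}
  have hKc : IsClosed K := isClosed_le (by fun_prop) (by fun_prop)
  let ι := {F : Set X // IsClosed F ∧ IPMSupportedOn μ F}
  have hK : K ∩ ⋂ i : ι, i.1 = ∅ := Set.eq_empty_iff_forall_notMem.mpr fun x ⟨hxK, hx⟩ => by
    have := hle x (by rwa [IPMsupport, Set.sInter_eq_iInter])
    simp only [K, Set.mem_ofPred_eq] at hxK
    linarith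
  obtain ⟨s, hs⟩ := hKc.isCompact.elim_finite_subfamily_closed _ (fun i : ι => i.2.1) hK
  refine (IPMSupportedOn.biInter h s (fun i => i.2.1) fun i => i.2.2).le_add_of_le_add_on h
    fun x hx => ?_
  have hxK : x ∉ K := fun hxK => (Set.eq_empty_iff_forall_notMem.mp hs) x ⟨hxK, hx⟩
  simp only [K, Set.mem_ofPred_eq, not_le] at hxK
  exact hxK.le

lemma IPMSupportedOn.of_le_add (h : IsIPM μ) {c : ℝ} (hμν : ∀ φ, μ φ ≤ ν φ + c)
    (hF : IPMSupportedOn ν F) : IPMSupportedOn μ F := by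
  refine of_forall_le_add fun φ ψ hle δ hδ => ?_
  set g : C(X, ℝ) := (φ - ψ) ⊔ 0
  obtain ⟨n, hn⟩ := exists_nat_gt ((ν ψ + c - μ φ) / δ)
  rw [div_lt_iff₀ hδ] at hn
  set χ : C(X, ℝ) := ψ + ((n : ℝ) + 1) • g
  have hχ : μ χ ≤ ν ψ + c := by
    have hνχ : ν χ = ν ψ := hF _ _ fun x hx => by simp [χ, g, hle x hx]
    simpa [hνχ] using hμν χ
  -- Where `φ - ψ > δ`, `χ - n δ = φ + n (φ - ψ - δ) ≥ φ`.
  have hφ : φ ≤ (ψ + const X δ) ⊔ (χ + const X (-(n * δ))) := by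
    refine ContinuousMap.le_def.mpr fun x => ?_
    have hgx : g x = max (φ x - ψ x) 0 := rfl
    have hχx : χ x = ψ x + ((n : ℝ) + 1) * g x := by simp [χ]
    simp only [ContinuousMap.sup_apply, ContinuousMap.add_apply, const_apply, hχx, le_max_iff]
    by_cases hsmall : φ x - ψ x ≤ δ
    · exact Or.inl (by linarith)
    · rw [hgx, max_eq_left (by linarith)]
      exact Or.inr (by nlinarith)
  have hmax := h.mono hφ
  rw [h.map_sup, h.map_add_const, h.map_add_const, le_max_iff] at hmax
  rcases hmax with hsmall | hlarge
  · exact hsmall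
  · linarith

lemma IPMsupport_subset_of_le_add (h : IsIPM μ) {c : ℝ} (hμν : ∀ φ, μ φ ≤ ν φ + c) :
    IPMsupport μ ⊆ IPMsupport ν :=
  Set.subset_sInter fun _ ⟨hFc, hF⟩ => IPMsupport_subset hFc (hF.of_le_add h hμν)

lemma IPMSupportedOn.mpComb {μ₁ μ₂ : C(X, ℝ) → ℝ} (α β : ℝ) (h₁ : IPMSupportedOn μ₁ F)
    (h₂ : IPMSupportedOn μ₂ F) : IPMSupportedOn (mpComb α β μ₁ μ₂) F :=
  fun φ ψ heq => by simp only [_root_.mpComb, h₁ φ ψ heq, h₂ φ ψ heq]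

lemma add_le_mpComb_left (α β : ℝ) (μ₁ μ₂ : C(X, ℝ) → ℝ) (φ : C(X, ℝ)) :
    α + μ₁ φ ≤ mpComb α β μ₁ μ₂ φ :=
  le_max_left _ _

lemma add_le_mpComb_right (α β : ℝ) (μ₁ μ₂ : C(X, ℝ) → ℝ) (φ : C(X, ℝ)) :
    β + μ₂ φ ≤ mpComb α β μ₁ μ₂ φ :=
  le_max_right _ _

end

theorem ipm_support_mpComb_general {X : Type*} [TopologicalSpace X] [CompactSpace X] [T2Space X]
    (μ₁ μ₂ : C(X, ℝ) → ℝ) (hμ₁ : IsIPM μ₁) (hμ₂ : IsIPM μ₂)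
    (α β : ℝ) :
    IPMsupport (mpComb α β μ₁ μ₂) = IPMsupport μ₁ ∪ IPMsupport μ₂ := by
  apply Set.Subset.antisymm
  · apply IPMsupport_subset ((isClosed_IPMsupport μ₁).union (isClosed_IPMsupport μ₂))
    exact IPMSupportedOn.mpComb α β (hμ₁.supportedOn_IPMsupport.mono Set.subset_union_left)
      (hμ₂.supportedOn_IPMsupport.mono Set.subset_union_right)
  · apply Set.union_subset
    · exact IPMsupport_subset_of_le_add hμ₁ (c := -α) fun φ => by
        linarith [add_le_mpComb_left α β μ₁ μ₂ φ]
    · exact IPMsupport_subset_of_le_add hμ₂ (c := -β) fun φ => by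
        linarith [add_le_mpComb_right α β μ₁ μ₂ φ]

/-- `supp (α⊙μ₁ ⊕ β⊙μ₂) = supp μ₁ ∪ supp μ₂`. -/
theorem ipm_support_mpComb {X : Type*} [TopologicalSpace X] [CompactSpace X] [T2Space X]
    (μ₁ μ₂ : C(X, ℝ) → ℝ) (hμ₁ : IsIPM μ₁) (hμ₂ : IsIPM μ₂)
    (α β : ℝ) (hαβ : max α β = 0) :
    IPMsupport (mpComb α β μ₁ μ₂) = IPMsupport μ₁ ∪ IPMsupport μ₂ :=
  ipm_support_mpComb_general μ₁ μ₂ hμ₁ hμ₂ α β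
end

section
/- (Corollary 2) For every Tychonoff space X, the set I_{β,ω}(X) of finitely supported idempotent probability measures on βX with all support points in X is everywhere dense in I_β(X). -/
section Aux
set_option linter.unusedSectionVars false
variable {K : Type*} [TopologicalSpace K] [CompactSpace K] [T2Space K]
variable {μ : C(K, ℝ) → ℝ}

lemma ipm_zero (hμ : IsIPM μ) : μ 0 = 0 := by
  have h := hμ.1 0
  have : (ContinuousMap.const K (0 : ℝ)) = 0 := by ext x; simp
  rwa [this] at h

lemma ipm_mono_on (hμ : IsIPM μ) {F : Set K} (hF : IPMSupportedOn μ F)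
    {φ ψ : C(K, ℝ)} (h : ∀ x ∈ F, φ x ≤ ψ x) : μ φ ≤ μ ψ := by
  have h1 : μ (φ ⊔ ψ) = μ ψ := hF _ _ (fun x hx => by
    simp [max_eq_right (h x hx)])
  have h2 := hμ.2.2 φ ψ
  rw [h1] at h2
  exact le_sup_left.trans h2.ge

lemma supportedOn_inter {F G : Set K} (hF : IsClosed F) (hG : IsClosed G)
    (hF' : IPMSupportedOn μ F) (hG' : IPMSupportedOn μ G) :
    IPMSupportedOn μ (F ∩ G) := by
  classical
  intro φ ψ h
  set s : Set K := F ∪ G with hs_def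
  have hs : IsClosed s := hF.union hG
  set F' : Set ↥s := (Subtype.val : ↥s → K) ⁻¹' F with hF'_def
  have hF'c : IsClosed F' := hF.preimage continuous_subtype_val
  have hG'c : IsClosed ((Subtype.val : ↥s → K) ⁻¹' G) := hG.preimage continuous_subtype_val
  have hfr : ∀ x ∈ frontier F', φ (x : ↥s).val = ψ (x : ↥s).val := by
    intro x hx
    have h1 : (x : K) ∈ F := by
      have := hx.1
      rwa [hF'c.closure_eq] at this
    have h2 : (x : K) ∈ G := by
      have hsub : closure F'ᶜ ⊆ (Subtype.val : ↥s → K) ⁻¹' G := by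
        apply hG'c.closure_subset_iff.mpr
        intro z hz
        rcases z.2 with hzF | hzG
        · exact absurd hzF hz
        · exact hzG
      rw [frontier_eq_closure_inter_closure] at hx
      exact hsub hx.2
    exact h x ⟨h1, h2⟩
  set f : C(↥s, ℝ) :=
    ⟨F'.piecewise (fun x => φ x.val) (fun x => ψ x.val),
      Continuous.piecewise hfr (φ.continuous.comp continuous_subtype_val)
        (ψ.continuous.comp continuous_subtype_val)⟩ with hf_def
  obtain ⟨g, hg⟩ := ContinuousMap.exists_restrict_eq hs f
  have hgx : ∀ x : ↥s, g x = F'.piecewise (fun x : ↥s => φ x.val) (fun x : ↥s => ψ x.val) x := by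
    intro x
    have := congrFun (congrArg (fun (u : C(↥s, ℝ)) => (u : ↥s → ℝ)) hg) x
    simpa [hf_def] using this
  have h1 : μ φ = μ g := by
    apply hF' φ g
    intro x hx
    have := hgx ⟨x, Or.inl hx⟩
    rw [Set.piecewise_eq_of_mem _ _ _ (by exact hx : (⟨x, Or.inl hx⟩ : ↥s) ∈ F')] at this
    exact this.symm
  have h2 : μ ψ = μ g := by
    apply hG' ψ g
    intro x hx
    have hxs : x ∈ s := Or.inr hx
    have := hgx ⟨x, hxs⟩
    by_cases hxF : (⟨x, hxs⟩ : ↥s) ∈ F'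
    · rw [Set.piecewise_eq_of_mem _ _ _ hxF] at this
      rw [this]
      exact (h x ⟨hxF, hx⟩).symm
    · rw [Set.piecewise_eq_of_notMem _ _ _ hxF] at this
      exact this.symm
  rw [h1, h2]

lemma supportedOn_univ : IPMSupportedOn μ (Set.univ : Set K) := by
  intro φ ψ h
  have : φ = ψ := ContinuousMap.ext fun x => h x trivial
  rw [this]

lemma exists_supporting_subset {U : Set K} (hU : IsOpen U)
    (h : IPMsupport μ ⊆ U) :
    ∃ F : Set K, IsClosed F ∧ IPMSupportedOn μ F ∧ F ⊆ U := by
  classical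
  have hc : IsCompact Uᶜ := hU.isClosed_compl.isCompact
  have hdisj : (Uᶜ ∩ ⋂ F : {F : Set K | IsClosed F ∧ IPMSupportedOn μ F}, (F : Set K)) = ∅ := by
    have he : (⋂ F : {F : Set K | IsClosed F ∧ IPMSupportedOn μ F}, (F : Set K))
        = IPMsupport μ := by
      rw [IPMsupport, Set.sInter_eq_iInter]
    rw [he, Set.eq_empty_iff_forall_notMem]
    rintro x ⟨hx1, hx2⟩
    exact hx1 (h hx2)
  obtain ⟨I, hI⟩ := hc.elim_finite_subfamily_closed
    (fun F : {F : Set K | IsClosed F ∧ IPMSupportedOn μ F} => (F : Set K))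
    (fun F => F.2.1) hdisj
  refine ⟨⋂ F ∈ I, (F : Set K), ?_, ?_, ?_⟩
  · exact isClosed_biInter (fun F _ => F.2.1)
  · clear hI
    induction I using Finset.induction with
    | empty => simpa using (supportedOn_univ (μ := μ))
    | @insert a I ha ih =>
      rw [Finset.set_biInter_insert]
      exact supportedOn_inter a.2.1 (isClosed_biInter (fun F _ => F.2.1)) a.2.2 ih
  · intro x hx
    by_contra hxU
    have : x ∈ Uᶜ ∩ ⋂ F ∈ I, (F : Set K) := ⟨hxU, hx⟩
    rw [hI] at this
    exact this

lemma empty_not_supporting (hμ : IsIPM μ) : ¬ IPMSupportedOn μ (∅ : Set K) := by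
  intro h
  have := h (ContinuousMap.const K 0) (ContinuousMap.const K 1)
    (fun x hx => absurd hx (Set.notMem_empty x))
  rw [hμ.1 0, hμ.1 1] at this
  norm_num at this

lemma ipm_main_point (hμ : IsIPM μ) (φ : C(K, ℝ)) {ε : ℝ} (hε : 0 < ε) :
    ∃ y ∈ IPMsupport μ, ∀ ψ : C(K, ℝ), μ φ - φ y - ε + ψ y ≤ μ ψ := by
  classical
  by_contra hcon
  push_neg at hcon
  choose! ψf hψf using hcon
  have hsuppc : IsCompact (IPMsupport μ) :=
    (isClosed_sInter (fun F hF => hF.1)).isCompact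
  set V : K → Set K :=
    fun y => {z | μ (ψf y) - μ φ + ε < (ψf y) z - φ z} with hV
  have hVopen : ∀ y : K, IsOpen (V y) :=
    fun y => isOpen_lt continuous_const ((ψf y).continuous.sub φ.continuous)
  have hVcover : IPMsupport μ ⊆ ⋃ y ∈ IPMsupport μ, V y := by
    intro z hz
    refine Set.mem_biUnion hz ?_
    have := hψf z hz
    simp only [V, Set.mem_setOf_eq]
    linarith
  obtain ⟨t, htsub, htfin, ht⟩ := hsuppc.elim_finite_subcover_image (fun y _ => hVopen y) hVcover
  lift t to Finset K using htfin with tf htf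
  have hUopen : IsOpen (⋃ y ∈ tf, V y) := isOpen_biUnion (fun y _ => hVopen y)
  obtain ⟨F, hFclosed, hFsupp, hFsub⟩ := exists_supporting_subset hUopen (by
    intro z hz
    exact ht hz)
  rcases tf.eq_empty_or_nonempty with rfl | htne
  · apply empty_not_supporting hμ
    have hFe : F = ∅ := by
      rw [Set.eq_empty_iff_forall_notMem]
      intro x hx
      simpa using hFsub hx
    rwa [hFe] at hFsupp
  · set θ : C(K, ℝ) :=
      tf.sup' htne (fun i => ψf i + ContinuousMap.const K (-(μ (ψf i)))) with hθ
    have hμθ : μ θ = 0 := by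
      have hmap : μ θ = tf.sup' htne
          (fun i => μ (ψf i + ContinuousMap.const K (-(μ (ψf i))))) :=
        map_finset_sup' (SupHom.mk μ (fun a b => hμ.2.2 a b)) htne _
      rw [hmap]
      have hc : ∀ i ∈ tf, μ (ψf i + ContinuousMap.const K (-(μ (ψf i)))) = 0 := by
        intro i _
        rw [hμ.2.1]; ring
      rw [Finset.sup'_congr htne rfl hc, Finset.sup'_const]
    have hOnF : ∀ z ∈ F, φ z ≤ (θ + ContinuousMap.const K (μ φ - ε)) z := by
      intro z hz
      obtain ⟨i, hi, hzi⟩ := Set.mem_iUnion₂.1 (hFsub hz)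
      have h1 : μ (ψf i) - μ φ + ε < (ψf i) z - φ z := hzi
      have h2 : (ψf i) z + -(μ (ψf i)) ≤ θ z := by
        have hle : (ψf i + ContinuousMap.const K (-(μ (ψf i)))) ≤ θ :=
          Finset.le_sup' (fun j => ψf j + ContinuousMap.const K (-(μ (ψf j)))) hi
        simpa using ContinuousMap.le_def.mp hle z
      simp only [ContinuousMap.add_apply, ContinuousMap.const_apply]
      linarith
    have hfin : μ φ ≤ μ (θ + ContinuousMap.const K (μ φ - ε)) :=
      ipm_mono_on hμ hFsupp hOnF
    rw [hμ.2.1, hμθ] at hfin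
    linarith

end Aux

section Approx
set_option linter.unusedSectionVars false
variable {K : Type*} [TopologicalSpace K] [CompactSpace K] [T2Space K]
variable {μ : C(K, ℝ) → ℝ}

lemma ipm_approx (hμ : IsIPM μ) {Y : Set K} (hY : IPMsupport μ ⊆ Y) {ε : ℝ} (hε : 0 < ε)
    (J : Finset C(K, ℝ)) :
    ∃ ν : C(K, ℝ) → ℝ, IsFinSuppIPM Y ν ∧ ∀ ψ ∈ J, |ν ψ - μ ψ| ≤ ε := by
  classical
  set n := J.card with hn
  set φ' : Fin (n + 1) → C(K, ℝ) := Fin.cons 0 (fun j => (J.equivFin.symm j : C(K, ℝ))) with hφ'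
  have hex : ∀ i : Fin (n + 1), ∃ y ∈ IPMsupport μ,
      ∀ ψ : C(K, ℝ), μ (φ' i) - (φ' i) y - ε + ψ y ≤ μ ψ :=
    fun i => ipm_main_point hμ (φ' i) hε
  choose y hy key using hex
  set lam0 : Fin (n + 1) → ℝ := fun i => μ (φ' i) - (φ' i) (y i) - ε with hlam0
  set M : ℝ := Finset.univ.sup' Finset.univ_nonempty lam0 with hM
  have hμ0 : μ 0 = 0 := ipm_zero hμ
  have hlam00 : lam0 0 = -ε := by
    simp only [hlam0, hφ']
    rw [Fin.cons_zero]
    simp [hμ0]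
  have hkey : ∀ i ψ, lam0 i + ψ (y i) ≤ μ ψ := by
    intro i ψ
    have := key i ψ
    simp only [hlam0]
    linarith
  have hlamle : ∀ i, lam0 i ≤ 0 := by
    intro i
    have := hkey i 0
    simpa [hμ0] using this
  have hMneg : M ≤ 0 := Finset.sup'_le _ _ (fun i _ => hlamle i)
  have hMge : -ε ≤ M := by
    rw [← hlam00]
    exact Finset.le_sup' lam0 (Finset.mem_univ 0)
  set lam : Fin (n + 1) → ℝ := fun i => lam0 i - M with hlam
  have hsup0 : Finset.univ.sup' Finset.univ_nonempty lam = 0 := by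
    apply le_antisymm
    · apply Finset.sup'_le
      intro i _
      have : lam0 i ≤ M := Finset.le_sup' lam0 (Finset.mem_univ i)
      simp only [hlam]; linarith
    · obtain ⟨i, _, hi⟩ := Finset.exists_mem_eq_sup' (Finset.univ_nonempty) lam0
      have : lam i = 0 := by simp only [hlam]; rw [← hM] at hi; rw [← hi]; ring
      rw [← this]
      exact Finset.le_sup' lam (Finset.mem_univ i)
  refine ⟨fun ψ => Finset.univ.sup' Finset.univ_nonempty fun i => lam i + ψ (y i),
    ⟨n, y, lam, fun i => hY (hy i), hsup0, rfl⟩, ?_⟩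
  intro ψ hψ
  have hub : (Finset.univ.sup' Finset.univ_nonempty fun i => lam i + ψ (y i)) ≤ μ ψ + ε := by
    apply Finset.sup'_le
    intro i _
    have h1 := hkey i ψ
    simp only [hlam]
    linarith
  have hlb : μ ψ - ε ≤ Finset.univ.sup' Finset.univ_nonempty fun i => lam i + ψ (y i) := by
    set j : Fin (n + 1) := (J.equivFin ⟨ψ, hψ⟩).succ with hj
    have hψj : φ' j = ψ := by
      simp only [hφ', hj, Fin.cons_succ]
      simp
    have h1 : lam j + ψ (y j) ≤ Finset.univ.sup' Finset.univ_nonempty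
        fun i => lam i + ψ (y i) :=
      Finset.le_sup' (fun i => lam i + ψ (y i)) (Finset.mem_univ j)
    have h2 : μ ψ - ε ≤ lam j + ψ (y j) := by
      have : lam0 j = μ ψ - ψ (y j) - ε := by simp only [hlam0]; rw [hψj]
      simp only [hlam, this]
      linarith
    linarith
  rw [abs_le]
  constructor <;> linarith

end Approx


/-- Corollary 2: `I_{β,ω}(X)` is dense in `I_β(X)`. -/
theorem finSuppIPM_X_dense_in_IBeta {X : Type*} [TopologicalSpace X] [T35Space X] :
    IBeta X ⊆
      closure {μ : C(StoneCech X, ℝ) → ℝ |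
        IsFinSuppIPM (Set.range (stoneCechUnit : X → StoneCech X)) μ} := by

  intro μ hμmem
  obtain ⟨hipm, hsupp⟩ := hμmem
  rw [mem_closure_iff_nhds]
  intro t ht
  rw [nhds_pi, Filter.mem_pi'] at ht
  obtain ⟨I, V, hV, hsub⟩ := ht
  have hball : ∀ φ : C(StoneCech X, ℝ), ∃ ε > 0, Metric.ball (μ φ) ε ⊆ V φ :=
    fun φ => Metric.mem_nhds_iff.mp (hV φ)
  choose εf hεf hballf using hball
  rcases I.eq_empty_or_nonempty with rfl | hne
  · obtain ⟨ν, hν, -⟩ := ipm_approx hipm hsupp one_pos (∅ : Finset C(StoneCech X, ℝ))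
    exact ⟨ν, hsub (by simp), hν⟩
  · set ε : ℝ := (I.inf' hne εf) / 2 with hε_def
    have hinf : 0 < I.inf' hne εf := by
      rw [Finset.lt_inf'_iff]
      exact fun φ _ => hεf φ
    have hε : 0 < ε := by rw [hε_def]; linarith
    obtain ⟨ν, hν, hclose⟩ := ipm_approx hipm hsupp hε I
    refine ⟨ν, hsub ?_, hν⟩
    intro φ hφ
    apply hballf φ
    rw [Metric.mem_ball, Real.dist_eq]
    have h1 := hclose φ (by exact hφ)
    have h2 : I.inf' hne εf ≤ εf φ := Finset.inf'_le εf (by exact hφ)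
    rw [abs_le] at h1
    rw [abs_lt]
    constructor <;> [skip; skip] <;> rw [hε_def] at h1 <;> cases h1 with
    | intro a b => linarith
end

section
/- Let f : X → Y be a continuous surjection of compact Hausdorff spaces. Then the map I(f) : I(X) → I(Y) is open if and only if f is open. -/
/-!
If `I(f)` is open, take `x₀ ∈ U` open and a Urysohn function `φ` vanishing off `U` with
`φ x₀ = 1`. Diracs `δ_y` close to `δ_{f x₀}` then have preimages `μ` with `μ φ > 0`; a preimage of
`δ_y` is carried by the fibre `f⁻¹ y`, so this fibre meets `U`.

Conversely, if `f` is open (it is closed anyway), then for every continuous `h` the map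
`φ ↦ (y ↦ max_{f⁻¹ y} (φ - h) - max_{f⁻¹ y} (-h))` lands in `C(Y)`, commutes with `max` and with
adding constants, and is a left inverse of `ψ ↦ ψ ∘ f`; composed with any `ν ∈ I(Y)` it gives a
preimage of `ν` under `I(f)`. Taking for `-h` a finite max-plus upper approximation of the density
`x ↦ inf_g (μ g - g x)` of `μ ∈ I(X)` makes these preimages close to `μ` on a prescribed finite set
of test functions as soon as `ν` is close to `I(f) μ`.
-/

open Filter Topology Set

namespace IsIPM

variable {X : Type*} [TopologicalSpace X] {μ : C(X, ℝ) → ℝ}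

lemma apply_const (hμ : IsIPM μ) (c : ℝ) : μ (ContinuousMap.const X c) = c := hμ.1 c

lemma apply_add_const (hμ : IsIPM μ) (φ : C(X, ℝ)) (c : ℝ) :
    μ (φ + ContinuousMap.const X c) = μ φ + c := hμ.2.1 φ c

lemma apply_sup (hμ : IsIPM μ) (φ ψ : C(X, ℝ)) : μ (φ ⊔ ψ) = max (μ φ) (μ ψ) := hμ.2.2 φ ψ

lemma apply_sub_const (hμ : IsIPM μ) (φ : C(X, ℝ)) (c : ℝ) :
    μ (φ - ContinuousMap.const X c) = μ φ - c := by
  have : φ - ContinuousMap.const X c = φ + ContinuousMap.const X (-c) := by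
    ext; simp [sub_eq_add_neg]
  rw [this, hμ.apply_add_const, sub_eq_add_neg]

lemma monotone (hμ : IsIPM μ) : Monotone μ := fun φ ψ h => by
  simpa [sup_eq_right.2 h] using hμ.apply_sup φ ψ

lemma nonempty (hμ : IsIPM μ) : Nonempty X := by
  by_contra h
  have h0 := hμ.apply_const 0
  rw [show ContinuousMap.const X (0 : ℝ) = ContinuousMap.const X 1 from
    ContinuousMap.ext fun x => absurd ⟨x⟩ h, hμ.apply_const] at h0
  norm_num at h0

lemma apply_finset_sup' (hμ : IsIPM μ) {ι : Type*} {s : Finset ι} (hs : s.Nonempty)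
    (F : ι → C(X, ℝ)) : μ (s.sup' hs F) = s.sup' hs (μ ∘ F) :=
  Finset.apply_sup'_eq_sup'_comp hs μ hμ.apply_sup

lemma apply_finset_sup'_sub_const (hμ : IsIPM μ) {ι : Type*} {s : Finset ι} (hs : s.Nonempty)
    (F : ι → C(X, ℝ)) : μ (s.sup' hs fun i => F i - ContinuousMap.const X (μ (F i))) = 0 := by
  simp [hμ.apply_finset_sup', hμ.apply_sub_const]

lemma apply_lt_apply [CompactSpace X] (hμ : IsIPM μ) {φ ψ : C(X, ℝ)} (h : ∀ x, φ x < ψ x) :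
    μ φ < μ ψ := by
  have := hμ.nonempty
  obtain ⟨x₀, -, hx₀⟩ := isCompact_univ.exists_isMinOn univ_nonempty
    (ψ - φ).continuous.continuousOn
  have hle : φ + ContinuousMap.const X (ψ x₀ - φ x₀) ≤ ψ := fun x => by
    have : ψ x₀ - φ x₀ ≤ ψ x - φ x := hx₀ (mem_univ x)
    show φ x + (ψ x₀ - φ x₀) ≤ ψ x
    linarith
  have := hμ.monotone hle
  rw [hμ.apply_add_const] at this
  linarith [h x₀]

/-- `x` attains the supremum in `μ φ = sup_x (d x + φ x)`, where `d x = inf_g (μ g - g x)` is the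
density of `μ`. -/
lemma exists_forall_sub_le [CompactSpace X] (hμ : IsIPM μ) (φ : C(X, ℝ)) :
    ∃ x, ∀ g : C(X, ℝ), μ φ - φ x ≤ μ g - g x := by
  by_contra! h
  choose g hg using h
  obtain ⟨S, hS⟩ := isCompact_univ.elim_finite_subcover
    (fun x => {x' | μ (g x) - g x x' < μ φ - φ x'})
    (fun x => isOpen_lt (continuous_const.sub (g x).continuous)
      (continuous_const.sub φ.continuous)) fun x _ => mem_iUnion.2 ⟨x, hg x⟩
  obtain ⟨x₀⟩ := hμ.nonempty
  have hSne : S.Nonempty := by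
    obtain ⟨i, hi, -⟩ := mem_iUnion₂.1 (hS (mem_univ x₀))
    exact ⟨i, hi⟩
  have hlt : ∀ x, (φ - ContinuousMap.const X (μ φ)) x <
      S.sup' hSne (fun i => g i - ContinuousMap.const X (μ (g i))) x := by
    intro x
    obtain ⟨i, hi, hx⟩ := mem_iUnion₂.1 (hS (mem_univ x))
    rw [ContinuousMap.sup'_apply, Finset.lt_sup'_iff]
    have hx : μ (g i) - g i x < μ φ - φ x := hx
    exact ⟨i, hi, by simp only [ContinuousMap.sub_apply, ContinuousMap.const_apply]; linarith⟩
  simpa [hμ.apply_sub_const, hμ.apply_finset_sup'_sub_const] using hμ.apply_lt_apply hlt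

end IsIPM

lemma isIPM_dirac {X : Type*} [TopologicalSpace X] (x : X) : IsIPM (IPMdirac x) :=
  ⟨fun _ => rfl, fun _ _ => rfl, fun _ _ => rfl⟩

lemma continuous_IPMdirac {X : Type*} [TopologicalSpace X] :
    Continuous (IPMdirac : X → C(X, ℝ) → ℝ) :=
  continuous_pi fun φ => φ.continuous

section IPMmap

variable {X Y : Type*} [TopologicalSpace X] [TopologicalSpace Y]

lemma IsIPM.ipmMap {μ : C(X, ℝ) → ℝ} (hμ : IsIPM μ) (f : C(X, Y)) : IsIPM (IPMmap f μ) :=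
  ⟨fun c => hμ.apply_const c, fun φ c => hμ.apply_add_const (φ.comp f) c,
    fun φ ψ => hμ.apply_sup (φ.comp f) (ψ.comp f)⟩

lemma IsIPM.exists_apply_le_of_ipmMap_eq_dirac [CompactSpace X] [NormalSpace Y] [T2Space Y]
    {μ : C(X, ℝ) → ℝ} (hμ : IsIPM μ) {f : C(X, Y)} {y : Y} (hy : IPMmap f μ = IPMdirac y)
    (φ : C(X, ℝ)) : ∃ x, f x = y ∧ μ φ ≤ φ x := by
  by_contra! h
  obtain ⟨η, hη, hηφ⟩ := (isClosed_singleton.preimage f.continuous).isCompact.exists_forall_le'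
    (f := fun x => μ φ - φ x) (continuous_const.sub φ.continuous).continuousOn
    fun x hx => sub_pos.2 (h x hx)
  obtain ⟨a, hηa, haμ⟩ := exists_between (sub_lt_self (μ φ) hη)
  have hK : IsClosed (f '' {x | a ≤ φ x}) :=
    ((isClosed_le continuous_const φ.continuous).isCompact.image f.continuous).isClosed
  have hyK : Disjoint {y} (f '' {x | a ≤ φ x}) := by
    rw [disjoint_singleton_left]
    rintro ⟨x, hx, rfl⟩
    linarith [hηφ x rfl, show a ≤ φ x from hx]
  obtain ⟨u, huy, huK, hu⟩ := exists_continuous_zero_one_of_isClosed isClosed_singleton hK hyK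
  set ψ : C(Y, ℝ) := ContinuousMap.const Y a + (‖φ‖ + |a|) • u
  have hφψ : φ ≤ ψ.comp f := fun x => show φ x ≤ a + (‖φ‖ + |a|) * u (f x) by
    by_cases hx : a ≤ φ x
    · rw [huK ⟨x, hx, rfl⟩, Pi.one_apply]
      linarith [(le_abs_self (φ x)).trans (φ.norm_coe_le_norm x), neg_abs_le a]
    · nlinarith [(hu (f x)).1, abs_nonneg a, norm_nonneg φ]
  have hψ : μ (ψ.comp f) = a := by
    change IPMmap f μ ψ = a
    simp [hy, IPMdirac, ψ, huy rfl]
  linarith [hμ.monotone hφψ]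

end IPMmap

noncomputable def fiberSup {X Y : Type*} (f : X → Y) (g : X → ℝ) (y : Y) : ℝ :=
  sSup (g '' (f ⁻¹' {y}))

lemma fiberSup_le {X Y : Type*} {f : X → Y} {g : X → ℝ} {y : Y} (hy : ∃ x, f x = y) {b : ℝ}
    (h : ∀ x, f x = y → g x ≤ b) : fiberSup f g y ≤ b :=
  csSup_le (Set.Nonempty.image g hy) (forall_mem_image.2 h)

section fiberSup

variable {X Y : Type*} [TopologicalSpace X] [CompactSpace X] [TopologicalSpace Y] [T2Space Y]
  {f : C(X, Y)}

lemma le_fiberSup (g : C(X, ℝ)) {x : X} {y : Y} (hx : f x = y) : g x ≤ fiberSup f g y :=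
  le_csSup ((isClosed_singleton.preimage f.continuous).isCompact.bddAbove_image
    g.continuous.continuousOn) ⟨x, hx, rfl⟩

lemma fiberSup_add_comp (hsurj : Function.Surjective f) (g : C(X, ℝ)) (ψ : C(Y, ℝ)) (y : Y) :
    fiberSup f ⇑(g + ψ.comp f) y = fiberSup f g y + ψ y := by
  refine le_antisymm (fiberSup_le (hsurj y) fun x hx => ?_) ?_
  · simpa [hx] using le_fiberSup g hx
  · rw [← le_sub_iff_add_le]
    refine fiberSup_le (hsurj y) fun x hx => le_sub_iff_add_le.2 ?_
    simpa [hx] using le_fiberSup (g + ψ.comp f) hx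

lemma fiberSup_sup (hsurj : Function.Surjective f) (g h : C(X, ℝ)) (y : Y) :
    fiberSup f ⇑(g ⊔ h) y = max (fiberSup f g y) (fiberSup f h y) := by
  refine le_antisymm (fiberSup_le (hsurj y) fun x hx => ?_) (max_le ?_ ?_)
  · exact max_le_max (le_fiberSup g hx) (le_fiberSup h hx)
  · exact fiberSup_le (hsurj y) fun x hx =>
      (le_max_left _ _).trans (le_fiberSup (g ⊔ h) hx)
  · exact fiberSup_le (hsurj y) fun x hx =>
      (le_max_right _ _).trans (le_fiberSup (g ⊔ h) hx)

lemma upperSemicontinuous_fiberSup (hsurj : Function.Surjective f) (g : C(X, ℝ)) :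
    UpperSemicontinuous (fiberSup f g) := by
  intro y t ht
  obtain ⟨s, hs, hst⟩ := exists_between ht
  have hy : y ∈ (f '' {x | s ≤ g x})ᶜ := by
    rintro ⟨x, hx, rfl⟩
    exact (show s ≤ g x from hx).trans (le_fiberSup g rfl) |>.not_gt hs
  filter_upwards [(f.continuous.isClosedMap _ (isClosed_le continuous_const g.continuous)
    ).isOpen_compl.mem_nhds hy] with y' hy'
  refine (fiberSup_le (hsurj y') fun x hx => ?_).trans_lt hst
  by_contra! hsx
  exact hy' ⟨x, hsx.le, hx⟩

lemma lowerSemicontinuous_fiberSup (hsurj : Function.Surjective f) (hopen : IsOpenMap f)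
    (g : C(X, ℝ)) :
    LowerSemicontinuous (fiberSup f g) := by
  intro y t ht
  obtain ⟨_, ⟨x, hx, rfl⟩, htx⟩ :=
    exists_lt_of_lt_csSup (s := g '' (f ⁻¹' {y})) (Set.Nonempty.image g (hsurj y)) ht
  filter_upwards [(hopen _ (isOpen_lt continuous_const g.continuous)).mem_nhds ⟨x, htx, hx⟩]
    with y' ⟨x', hx', hfx'⟩
  exact hx'.trans_le (le_fiberSup g hfx')

lemma continuous_fiberSup (hsurj : Function.Surjective f) (hopen : IsOpenMap f) (g : C(X, ℝ)) :
    Continuous (fiberSup f g) :=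
  continuous_iff_lower_upperSemicontinuous.2
    ⟨lowerSemicontinuous_fiberSup hsurj hopen g, upperSemicontinuous_fiberSup hsurj g⟩

end fiberSup

section fiberLift

variable {X Y : Type*} [TopologicalSpace X] [CompactSpace X] [TopologicalSpace Y] [T2Space Y]
  {f : C(X, Y)} (hsurj : Function.Surjective f) (hopen : IsOpenMap f)

noncomputable def fiberLift (h φ : C(X, ℝ)) : C(Y, ℝ) where
  toFun := fiberSup f ⇑(φ - h) - fiberSup f ⇑(-h)
  continuous_toFun := (continuous_fiberSup hsurj hopen _).sub (continuous_fiberSup hsurj hopen _)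

lemma fiberLift_apply (h φ : C(X, ℝ)) (y : Y) :
    fiberLift hsurj hopen h φ y = fiberSup f ⇑(φ - h) y - fiberSup f ⇑(-h) y := rfl

lemma fiberLift_add_comp (h φ : C(X, ℝ)) (ψ : C(Y, ℝ)) :
    fiberLift hsurj hopen h (φ + ψ.comp f) = fiberLift hsurj hopen h φ + ψ := by
  ext y
  simp only [fiberLift_apply, ContinuousMap.add_apply, add_sub_right_comm φ,
    fiberSup_add_comp hsurj]
  ring

lemma fiberLift_comp (h : C(X, ℝ)) (ψ : C(Y, ℝ)) : fiberLift hsurj hopen h (ψ.comp f) = ψ := by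
  ext y
  simpa [fiberLift_apply] using congrArg (· y) (fiberLift_add_comp hsurj hopen h 0 ψ)

lemma fiberLift_add_const (h φ : C(X, ℝ)) (c : ℝ) :
    fiberLift hsurj hopen h (φ + ContinuousMap.const X c) =
      fiberLift hsurj hopen h φ + ContinuousMap.const Y c :=
  fiberLift_add_comp hsurj hopen h φ (ContinuousMap.const Y c)

lemma fiberLift_sup (h φ φ' : C(X, ℝ)) :
    fiberLift hsurj hopen h (φ ⊔ φ') = fiberLift hsurj hopen h φ ⊔ fiberLift hsurj hopen h φ' := by
  have : φ ⊔ φ' - h = (φ - h) ⊔ (φ' - h) := by ext; simp [max_sub_sub_right]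
  ext y
  simp only [fiberLift_apply, this, fiberSup_sup hsurj, ContinuousMap.sup_apply,
    max_sub_sub_right]

lemma IsIPM.comp_fiberLift {ν : C(Y, ℝ) → ℝ} (hν : IsIPM ν) (h : C(X, ℝ)) :
    IsIPM fun φ => ν (fiberLift hsurj hopen h φ) :=
  ⟨fun c => (congrArg ν (fiberLift_comp hsurj hopen h _)).trans (hν.apply_const c),
    fun φ c => by simp only [fiberLift_add_const, hν.apply_add_const],
    fun φ φ' => by simp only [fiberLift_sup, hν.apply_sup]⟩

lemma ipmMap_comp_fiberLift (ν : C(Y, ℝ) → ℝ) (h : C(X, ℝ)) :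
    IPMmap f (fun φ => ν (fiberLift hsurj hopen h φ)) = ν :=
  funext fun ψ => congrArg ν (fiberLift_comp hsurj hopen h ψ)

variable {μ : C(X, ℝ) → ℝ} {h φ : C(X, ℝ)}

lemma IsIPM.apply_fiberLift_comp_le (hμ : IsIPM μ) (hh : μ h ≤ 0)
    (hφh : ∀ x, φ x - μ φ ≤ h x) : μ ((fiberLift hsurj hopen h φ).comp f) ≤ μ φ := by
  have hle : (fiberLift hsurj hopen h φ).comp f ≤ h + ContinuousMap.const X (μ φ) := fun x =>
    show fiberLift hsurj hopen h φ (f x) ≤ h x + μ φ by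
    have hsup : fiberSup f ⇑(φ - h) (f x) ≤ μ φ := fiberSup_le (hsurj _) fun x' _ => by
      simp only [ContinuousMap.sub_apply]
      linarith [hφh x']
    have hx : -h x ≤ fiberSup f ⇑(-h) (f x) := le_fiberSup (-h) rfl
    rw [fiberLift_apply]
    linarith
  calc μ ((fiberLift hsurj hopen h φ).comp f) ≤ μ (h + ContinuousMap.const X (μ φ)) :=
        hμ.monotone hle
    _ = μ h + μ φ := hμ.apply_add_const h (μ φ)
    _ ≤ μ φ := by linarith

lemma lt_apply_fiberLift_comp_add {ε : ℝ} {x₀ : X} (hx₀ : μ φ ≤ φ x₀ - h x₀) {ψ : C(Y, ℝ)}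
    (hψ : ∀ ψ' : C(Y, ℝ), μ (ψ.comp f) - ψ (f x₀) < μ (ψ'.comp f) - ψ' (f x₀) + ε)
    (hψh : ∀ x, ψ (f x) - μ (ψ.comp f) ≤ h x) :
    μ φ < μ ((fiberLift hsurj hopen h φ).comp f) + ε := by
  have hsup : fiberSup f ⇑(-h) (f x₀) ≤ μ (ψ.comp f) - ψ (f x₀) :=
    fiberSup_le (hsurj _) fun x hx => by
      rw [← hx, ContinuousMap.neg_apply]
      linarith [hψh x]
  have hx₀' : φ x₀ - h x₀ ≤ fiberSup f ⇑(φ - h) (f x₀) := le_fiberSup (φ - h) rfl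
  have := hψ (fiberLift hsurj hopen h φ)
  rw [fiberLift_apply] at this
  linarith

end fiberLift

lemma exists_forall_lt_add_of_bddBelow {α : Type*} [Nonempty α] {F : α → ℝ}
    (hF : BddBelow (range F)) {ε : ℝ} (hε : 0 < ε) : ∃ a, ∀ b, F a < F b + ε := by
  obtain ⟨a, ha⟩ := exists_lt_of_ciInf_lt (lt_add_of_pos_right (⨅ b, F b) hε)
  exact ⟨a, fun b => ha.trans_le (add_le_add_left (ciInf_le hF b) ε)⟩

lemma IsIPM.exists_fiberLift_approx {X Y : Type*} [TopologicalSpace X] [CompactSpace X]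
    [TopologicalSpace Y] [T2Space Y] {f : C(X, Y)} (hsurj : Function.Surjective f)
    (hopen : IsOpenMap f) {μ : C(X, ℝ) → ℝ} (hμ : IsIPM μ) (Φ : Finset C(X, ℝ)) {ε : ℝ}
    (hε : 0 < ε) : ∃ h, ∀ φ ∈ Φ, |μ ((fiberLift hsurj hopen h φ).comp f) - μ φ| < ε := by
  classical
  choose x₀ hx₀ using hμ.exists_forall_sub_le
  choose ψ hψ using fun φ => exists_forall_lt_add_of_bddBelow
    (F := fun ψ : C(Y, ℝ) => μ (ψ.comp f) - ψ (f (x₀ φ)))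
    ⟨μ φ - φ (x₀ φ), forall_mem_range.2 fun ψ' => hx₀ φ (ψ'.comp f)⟩ hε
  set S := insert 0 (Φ ∪ Φ.image fun φ => (ψ φ).comp f)
  set h := S.sup' (Finset.insert_nonempty _ _) fun g => g - ContinuousMap.const X (μ g)
  have hh : μ h = 0 := hμ.apply_finset_sup'_sub_const _ id
  have hle_h : ∀ g ∈ S, ∀ x, g x - μ g ≤ h x := fun g hg x =>
    Finset.le_sup' (fun g => g - ContinuousMap.const X (μ g)) hg x
  have hh_le : ∀ φ, h (x₀ φ) ≤ φ (x₀ φ) - μ φ := fun φ => by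
    rw [ContinuousMap.sup'_apply]
    exact Finset.sup'_le _ _ fun g _ => by
      simp only [ContinuousMap.sub_apply, ContinuousMap.const_apply]
      linarith [hx₀ φ g]
  refine ⟨h, fun φ hφ => abs_sub_lt_iff.2 ⟨?_, ?_⟩⟩
  · have := hμ.apply_fiberLift_comp_le hsurj hopen hh.le
      (hle_h φ (Finset.mem_insert_of_mem (Finset.mem_union_left _ hφ)))
    linarith
  · have := lt_apply_fiberLift_comp_add hsurj hopen (φ := φ) (by linarith [hh_le φ]) (hψ φ)
      (hle_h _ (Finset.mem_insert_of_mem (Finset.mem_union_right _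
        (Finset.mem_image_of_mem _ hφ))))
    linarith

lemma exists_finset_forall_abs_sub_lt_subset {ι : Type*} {x : ι → ℝ} {U : Set (ι → ℝ)}
    (hU : U ∈ 𝓝 x) : ∃ (I : Finset ι) (ε : ℝ), 0 < ε ∧ {y | ∀ i ∈ I, |y i - x i| < ε} ⊆ U := by
  rw [nhds_pi, Filter.mem_pi'] at hU
  obtain ⟨I, t, ht, hIt⟩ := hU
  have hball : ∀ i, ∀ᶠ ε in 𝓝[>] (0 : ℝ), Metric.ball (x i) ε ⊆ t i := fun i => by
    obtain ⟨δ, hδ, hδt⟩ := Metric.mem_nhds_iff.1 (ht i)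
    filter_upwards [Ioc_mem_nhdsGT hδ] with ε hε
    exact (Metric.ball_subset_ball hε.2).trans hδt
  obtain ⟨ε, hε, hεt⟩ := (eventually_mem_nhdsWithin.and
    ((Filter.eventually_all_finset I).2 fun i _ => hball i)).exists
  exact ⟨I, ε, hε, fun y hy => hIt fun i hi => hεt i hi (hy i hi)⟩

lemma IsIPM.exists_isOpen_subset_image {X Y : Type*} [TopologicalSpace X] [CompactSpace X]
    [TopologicalSpace Y] [T2Space Y] {f : C(X, Y)} (hsurj : Function.Surjective f)
    (hopen : IsOpenMap f) {μ : C(X, ℝ) → ℝ} (hμ : IsIPM μ) {U : Set (C(X, ℝ) → ℝ)}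
    (hU : U ∈ 𝓝 μ) : ∃ N, IsOpen N ∧ IPMmap f μ ∈ N ∧
      {ν | IsIPM ν} ∩ N ⊆ IPMmap f '' ({μ | IsIPM μ} ∩ U) := by
  obtain ⟨Φ, ε, hε, hΦU⟩ := exists_finset_forall_abs_sub_lt_subset hU
  obtain ⟨h, hh⟩ := hμ.exists_fiberLift_approx hsurj hopen Φ (half_pos hε)
  let T := fiberLift hsurj hopen h
  refine ⟨⋂ φ ∈ Φ, {ν | |ν (T φ) - μ ((T φ).comp f)| < ε / 2},
    isOpen_biInter_finset fun φ _ => isOpen_lt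
      ((continuous_apply _).sub continuous_const).abs continuous_const,
    mem_iInter₂.2 fun φ _ => by simpa [IPMmap] using half_pos hε, ?_⟩
  rintro ν ⟨hν, hνN⟩
  refine ⟨_, ⟨hν.comp_fiberLift hsurj hopen h, hΦU fun φ hφ => ?_⟩,
    ipmMap_comp_fiberLift hsurj hopen ν h⟩
  have := mem_iInter₂.1 hνN φ hφ
  calc |ν (T φ) - μ φ| ≤ |ν (T φ) - μ ((T φ).comp f)| + |μ ((T φ).comp f) - μ φ| :=
        abs_sub_le _ _ _
    _ < ε / 2 + ε / 2 := add_lt_add this (hh φ hφ)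
    _ = ε := add_halves ε

lemma exists_isOpen_image_eq_inter {α β : Type*} [TopologicalSpace β] {F : α → β} {S : Set α}
    {T : Set β} (hST : MapsTo F S T)
    (h : ∀ a ∈ S, ∃ N, IsOpen N ∧ F a ∈ N ∧ T ∩ N ⊆ F '' S) :
    ∃ V, IsOpen V ∧ F '' S = T ∩ V := by
  choose! N hN hFN hNS using h
  refine ⟨⋃ a ∈ S, N a, isOpen_biUnion hN, subset_antisymm ?_ ?_⟩
  · rintro _ ⟨a, ha, rfl⟩
    exact ⟨hST ha, mem_biUnion ha (hFN a ha)⟩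
  · rintro b ⟨hb, hbN⟩
    obtain ⟨a, ha, hbN⟩ := mem_iUnion₂.1 hbN
    exact hNS a ha ⟨hb, hbN⟩

/-- for a continuous surjection `f` of compact Hausdorff spaces, the map
`I(f) : I(X) → I(Y)` is open iff `f` is open. Openness of `I(f)` is expressed via the
subspace topologies on `I(X) ⊆ ℝ^{C(X)}` and `I(Y) ⊆ ℝ^{C(Y)}`. -/
theorem ipm_map_open_iff_open {X Y : Type*} [TopologicalSpace X] [CompactSpace X]
    [T2Space X] [TopologicalSpace Y] [CompactSpace Y] [T2Space Y]
    (f : C(X, Y)) (hsurj : Function.Surjective f) :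
    (∀ U : Set (C(X, ℝ) → ℝ), IsOpen U →
      ∃ V : Set (C(Y, ℝ) → ℝ), IsOpen V ∧
        IPMmap f '' ({μ | IsIPM μ} ∩ U) = {ν | IsIPM ν} ∩ V) ↔
    IsOpenMap f := by
  refine ⟨fun hI U hU => isOpen_iff_mem_nhds.2 ?_, fun hopen U hU =>
    exists_isOpen_image_eq_inter (fun μ hμ => hμ.1.ipmMap f) fun μ hμ =>
      hμ.1.exists_isOpen_subset_image hsurj hopen (hU.mem_nhds hμ.2)⟩
  rintro _ ⟨x₀, hx₀, rfl⟩
  obtain ⟨φ, hφU, hφx₀, -⟩ := exists_continuous_zero_one_of_isClosed hU.isClosed_compl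
    isClosed_singleton (disjoint_singleton_right.2 (not_not.2 hx₀))
  obtain ⟨V, hV, hVeq⟩ := hI {μ | 0 < μ φ} (isOpen_lt continuous_const (continuous_apply φ))
  have hdirac : ∀ y, IPMdirac y ∈ V ↔ IPMdirac y ∈ IPMmap f '' ({μ | IsIPM μ} ∩ {μ | 0 < μ φ}) :=
    fun y => by simp [hVeq, isIPM_dirac y]
  refine mem_of_superset ((hV.preimage continuous_IPMdirac).mem_nhds ((hdirac _).2
    ⟨IPMdirac x₀, ⟨isIPM_dirac x₀, by simp [IPMdirac, hφx₀ rfl]⟩, rfl⟩)) fun y hy => ?_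
  obtain ⟨μ, ⟨hμ, hμφ⟩, hμy⟩ := (hdirac y).1 hy
  obtain ⟨x, rfl, hx⟩ := hμ.exists_apply_le_of_ipmMap_eq_dirac hμy φ
  exact ⟨x, by_contra fun hxU => by
    linarith [show φ x = 0 from hφU hxU, show 0 < μ φ from hμφ], rfl⟩
end
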